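/- arXiv:2503.00951 — 2 statements merged into one kernel-verified Lean document; each statement's English description precedes it below -/
import Mathlib

section
/- Suppose x_t^{−P} = √ᾱ·x_0^{−P} + √(1−ᾱ)·ε^{−P} and for s > −P, x_t^s = √γ̄·(√ᾱ·x_0^s + √(1−ᾱ)·ε^s) + √(1−γ̄)·x_t^{s−1}, where ε^{−P}, ..., ε^s are independent N(0,I). Then x_t^s = √ᾱ·Dynamics(x_0^{−P:s}; γ̄) + √(1−ᾱ)·ε̃^s where ε̃^s is distributed N(0,I). -/
open MeasureTheory ProbabilityTheory

/-- The standard Gaussian measure `N(0, I)` on `ℝ^d`. -/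
noncomputable def stdGaussian (d : ℕ) : Measure (Fin d → ℝ) :=
  Measure.pi fun _ => gaussianReal 0 1

/-- `Dynamics`, with index `n = s + P` (so `n = 0` is the base state `x_{-P}`). -/
noncomputable def dyn {V : Type*} [AddCommGroup V] [Module ℝ V]
    (γ : ℝ) (x : ℕ → V) : ℕ → V
  | 0 => x 0
  | n + 1 => Real.sqrt γ • x (n + 1) + Real.sqrt (1 - γ) • dyn γ x n

section ForwardAux

open Real
open scoped NNReal ENNReal

private lemma exp_aux {c1 c2 c3 c4 e1 e2 e3 e4 : ℝ} (hc : c1 * c2 = c3 * c4)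
    (he : e1 + e2 = e3 + e4) :
    c1 * rexp e1 * (c2 * rexp e2) = c3 * rexp e3 * (c4 * rexp e4) := by
  rw [mul_mul_mul_comm, mul_mul_mul_comm c3, ← Real.exp_add, ← Real.exp_add, hc, he]

lemma pdf_mul (v w : ℝ≥0) (hv : v ≠ 0) (hw : w ≠ 0) (z y : ℝ) :
    gaussianPDFReal 0 v (z - y) * gaussianPDFReal 0 w y
      = gaussianPDFReal 0 (v + w) z *
        gaussianPDFReal ((w : ℝ) * z / ((v : ℝ) + w)) (⟨(v:ℝ) * w / ((v:ℝ) + w), by positivity⟩) y := by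
  have hv' : (0:ℝ) < v := lt_of_le_of_ne v.coe_nonneg (by exact_mod_cast (Ne.symm hv))
  have hw' : (0:ℝ) < w := lt_of_le_of_ne w.coe_nonneg (by exact_mod_cast (Ne.symm hw))
  simp only [gaussianPDFReal, NNReal.coe_add, NNReal.coe_mk, sub_zero]
  simp only [NNReal.toReal] at hv' hw' ⊢
  refine exp_aux ?_ ?_
  · rw [← mul_inv, ← mul_inv, ← Real.sqrt_mul (by positivity), ← Real.sqrt_mul (by positivity)]
    congr 2
    field_simp
  · field_simp
    ring

lemma gaussianReal_conv (v w : ℝ≥0) (hv : v ≠ 0) (hw : w ≠ 0) :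
    ((gaussianReal 0 v).prod (gaussianReal 0 w)).map (fun p : ℝ × ℝ => p.1 + p.2)
      = gaussianReal 0 (v + w) := by
  have hvw : v + w ≠ 0 := by positivity
  have hv' : (0:ℝ) < v := lt_of_le_of_ne v.coe_nonneg (by exact_mod_cast (Ne.symm hv))
  have hw' : (0:ℝ) < w := lt_of_le_of_ne w.coe_nonneg (by exact_mod_cast (Ne.symm hw))
  set f := gaussianPDF 0 v with hf
  set g := gaussianPDF 0 w with hg
  rw [gaussianReal_of_var_ne_zero _ hv, gaussianReal_of_var_ne_zero _ hw,
    gaussianReal_of_var_ne_zero _ hvw]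
  ext s hs
  rw [Measure.map_apply measurable_add hs, Measure.prod_apply (measurable_add hs),
    withDensity_apply _ hs]
  have hslice : ∀ x : ℝ, (volume.withDensity g) (Prod.mk x ⁻¹' ((fun p : ℝ × ℝ => p.1 + p.2) ⁻¹' s))
      = ∫⁻ z in s, g (z - x) := by
    intro x
    have hpre : Prod.mk x ⁻¹' ((fun p : ℝ × ℝ => p.1 + p.2) ⁻¹' s) = (fun y => x + y) ⁻¹' s := by
      ext y; simp
    rw [hpre, withDensity_apply _ (measurable_const_add x hs)]
    have hmp : MeasurePreserving (fun y : ℝ => x + y) volume volume :=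
      measurePreserving_add_left volume x
    have hemb : MeasurableEmbedding (fun y : ℝ => x + y) :=
      (Homeomorph.addLeft x).measurableEmbedding
    calc ∫⁻ y in (fun y => x + y) ⁻¹' s, g y
        = ∫⁻ y in (fun y => x + y) ⁻¹' s, (fun z => g (z - x)) (x + y) := by
          congr 1; ext y; simp
      _ = ∫⁻ z in s, (fun z => g (z - x)) z := by
          exact hmp.setLIntegral_comp_preimage_emb hemb (fun z => g (z - x)) s
  simp_rw [← hf, ← hg, hslice]
  have hgm : Measurable fun q : ℝ × ℝ => g (q.2 - q.1) :=
    (measurable_gaussianPDF 0 w).comp (measurable_snd.sub measurable_fst)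
  have hinner : Measurable fun x : ℝ => ∫⁻ z in s, g (z - x) :=
    (Measurable.lintegral_prod_right (f := fun x z => g (z - x)) hgm)
  rw [lintegral_withDensity_eq_lintegral_mul _ (measurable_gaussianPDF 0 v) hinner]
  simp only [Pi.mul_apply]
  have hswap : ∫⁻ x, f x * ∫⁻ z in s, g (z - x) ∂volume
      = ∫⁻ z in s, ∫⁻ x, f x * g (z - x) ∂volume := by
    have h1 : ∀ x : ℝ, f x * ∫⁻ z in s, g (z - x)
        = ∫⁻ z in s, f x * g (z - x) :=
      fun x => (lintegral_const_mul (f x)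
        ((measurable_gaussianPDF 0 w).comp (measurable_id.sub_const x))).symm
    rw [lintegral_congr h1]
    exact lintegral_lintegral_swap
      (((measurable_gaussianPDF 0 v).comp measurable_fst).mul
        ((measurable_gaussianPDF 0 w).comp (measurable_snd.sub measurable_fst))).aemeasurable
  rw [hswap]
  have hpt : ∀ z x : ℝ, f x * g (z - x)
      = gaussianPDF 0 (w + v) z *
        ENNReal.ofReal (gaussianPDFReal ((v : ℝ) * z / ((w : ℝ) + v))
          (⟨(w:ℝ) * v / ((w:ℝ) + v), by positivity⟩) x) := by
    intro z x
    simp only [hf, hg, gaussianPDF_def]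
    rw [← ENNReal.ofReal_mul (gaussianPDFReal_nonneg _ _ _),
      ← ENNReal.ofReal_mul (gaussianPDFReal_nonneg _ _ _)]
    congr 1
    rw [mul_comm]
    exact pdf_mul w v hw hv z x
  have hfin : ∀ z : ℝ, ∫⁻ x, f x * g (z - x) ∂volume = gaussianPDF 0 (w + v) z := by
    intro z
    simp_rw [hpt z]
    erw [lintegral_const_mul _ (measurable_gaussianPDFReal _ _).ennreal_ofReal,
      lintegral_gaussianPDFReal_eq_one _ (by erw [← NNReal.coe_ne_zero, NNReal.coe_mk]; positivity), mul_one]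
  rw [lintegral_congr fun z => hfin z, add_comm w v]

lemma gauss_comb (a b : ℝ) (ha : 0 ≤ a) (hb : 0 ≤ b) (hab : a ^ 2 + b ^ 2 = 1) :
    ((gaussianReal 0 1).prod (gaussianReal 0 1)).map (fun p : ℝ × ℝ => a * p.1 + b * p.2)
      = gaussianReal 0 1 := by
  by_cases hb0 : b = 0
  · have ha1 : a = 1 := by nlinarith
    subst hb0; subst ha1
    simp only [one_mul, zero_mul, add_zero]
    have : (fun p : ℝ × ℝ => p.1) = Prod.fst := rfl
    rw [this, Measure.map_fst_prod]
    simp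
  by_cases ha0 : a = 0
  · have hb1 : b = 1 := by nlinarith
    subst ha0; subst hb1
    simp only [one_mul, zero_mul, zero_add]
    have : (fun p : ℝ × ℝ => p.2) = Prod.snd := rfl
    rw [this, Measure.map_snd_prod]
    simp
  · have hcomp : (fun p : ℝ × ℝ => a * p.1 + b * p.2)
        = (fun p : ℝ × ℝ => p.1 + p.2) ∘ (Prod.map (a * ·) (b * ·)) := rfl
    rw [hcomp, ← Measure.map_map measurable_add
      ((measurable_const_mul a).prodMap (measurable_const_mul b)),
      ← Measure.map_prod_map _ _ (measurable_const_mul a) (measurable_const_mul b),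
      gaussianReal_map_const_mul, gaussianReal_map_const_mul, mul_zero, mul_zero, mul_one, mul_one,
      gaussianReal_conv _ _ (by rw [← NNReal.coe_ne_zero, NNReal.coe_mk]; exact pow_ne_zero 2 ha0) (by rw [← NNReal.coe_ne_zero, NNReal.coe_mk]; exact pow_ne_zero 2 hb0)]
    congr 1
    ext
    push_cast
    exact hab

lemma stdGaussian_comb {Ω : Type*} [MeasurableSpace Ω] (P : Measure Ω) [IsProbabilityMeasure P]
    (d : ℕ) (a b : ℝ) (ha : 0 ≤ a) (hb : 0 ≤ b) (hab : a ^ 2 + b ^ 2 = 1)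
    (X Y : Ω → Fin d → ℝ) (hX : Measurable X) (hY : Measurable Y)
    (hXY : IndepFun X Y P) (hgX : P.map X = stdGaussian d) (hgY : P.map Y = stdGaussian d) :
    P.map (fun ω => a • X ω + b • Y ω) = stdGaussian d := by
  have hjoint : P.map (fun ω => (X ω, Y ω)) = (stdGaussian d).prod (stdGaussian d) := by
    rw [(indepFun_iff_map_prod_eq_prod_map_map hX.aemeasurable hY.aemeasurable).mp hXY, hgX, hgY]
  have hT : Measurable (fun p : (Fin d → ℝ) × (Fin d → ℝ) => a • p.1 + b • p.2) :=
    (measurable_fst.const_smul a).add (measurable_snd.const_smul b)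
  have hcomp : (fun ω => a • X ω + b • Y ω)
      = (fun p : (Fin d → ℝ) × (Fin d → ℝ) => a • p.1 + b • p.2) ∘ (fun ω => (X ω, Y ω)) := rfl
  rw [hcomp, ← Measure.map_map hT (hX.prodMk hY), hjoint]
  have hmp := measurePreserving_arrowProdEquivProdArrow ℝ ℝ (Fin d)
    (fun _ => gaussianReal 0 1) (fun _ => gaussianReal 0 1)
  rw [show (stdGaussian d).prod (stdGaussian d)
      = (Measure.pi fun _ : Fin d => (gaussianReal 0 1).prod (gaussianReal 0 1)).map
        (MeasurableEquiv.arrowProdEquivProdArrow ℝ ℝ (Fin d)) from hmp.map_eq.symm,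
    Measure.map_map hT (MeasurableEquiv.arrowProdEquivProdArrow ℝ ℝ (Fin d)).measurable]
  have hpi := measurePreserving_pi (fun _ : Fin d => (gaussianReal 0 1).prod (gaussianReal 0 1))
    (fun _ : Fin d => gaussianReal 0 1)
    (f := fun _ (q : ℝ × ℝ) => a * q.1 + b * q.2)
    (fun _ => ⟨(measurable_fst.const_mul a).add (measurable_snd.const_mul b),
      gauss_comb a b ha hb hab⟩)
  have hfun : ((fun p : (Fin d → ℝ) × (Fin d → ℝ) => a • p.1 + b • p.2)
        ∘ (MeasurableEquiv.arrowProdEquivProdArrow ℝ ℝ (Fin d)))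
      = fun (f : Fin d → ℝ × ℝ) (j : Fin d) => a * (f j).1 + b * (f j).2 := by
    funext f
    ext j
    simp [MeasurableEquiv.arrowProdEquivProdArrow, Equiv.arrowProdEquivProdArrow]
  rw [hfun]
  exact hpi.map_eq

end ForwardAux

/-- Suppose `x_t^{−P} = √abar·x_0^{−P} + √(1−abar)·ε^{−P}` and for `s > −P`,
`x_t^s = √gbar·(√abar·x_0^s + √(1−abar)·ε^s) + √(1−gbar)·x_t^{s−1}` with `ε^{−P}, …, ε^s`
independent `N(0, I)`. Then `x_t^s = √abar·Dynamics(x_0^{−P:s}; gbar) + √(1−abar)·ε̃^s`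
where `ε̃^s = √gbar·ε^s + √(1−gbar)·ε̃^{s−1}` is distributed `N(0, I)`.
(Indices shifted so that `0` plays the role of `−P`.) -/
theorem forward_process_closed_form {Ω : Type*} [MeasurableSpace Ω] (P : Measure Ω)
    [IsProbabilityMeasure P] (d : ℕ) (abar gbar : ℝ)
    (habar : abar ∈ Set.Ioc (0 : ℝ) 1) (hgbar : gbar ∈ Set.Ioc (0 : ℝ) 1)
    (x0 : ℕ → Fin d → ℝ) (ε : ℕ → Ω → Fin d → ℝ)
    (hmeas : ∀ i, Measurable (ε i))
    (hind : iIndepFun ε P)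
    (hgauss : ∀ i, P.map (ε i) = stdGaussian d)
    (x : ℕ → Ω → Fin d → ℝ)
    (hxbase : ∀ ω, x 0 ω = Real.sqrt abar • x0 0 + Real.sqrt (1 - abar) • ε 0 ω)
    (hxstep : ∀ s ω, x (s + 1) ω
      = Real.sqrt gbar • (Real.sqrt abar • x0 (s + 1) + Real.sqrt (1 - abar) • ε (s + 1) ω)
        + Real.sqrt (1 - gbar) • x s ω)
    (εt : ℕ → Ω → Fin d → ℝ)
    (hεbase : εt 0 = ε 0)
    (hεstep : ∀ s ω, εt (s + 1) ω
      = Real.sqrt gbar • ε (s + 1) ω + Real.sqrt (1 - gbar) • εt s ω) :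
    (∀ s ω, x s ω = Real.sqrt abar • dyn gbar x0 s + Real.sqrt (1 - abar) • εt s ω)
      ∧ ∀ s, P.map (εt s) = stdGaussian d := by
  constructor
  · intro s
    induction s with
    | zero => intro ω; simpa [hεbase, dyn] using hxbase ω
    | succ n ih =>
      intro ω
      rw [hxstep n ω, ih ω, hεstep n ω]
      simp only [dyn]
      module
  · have key : ∀ s, Measurable (εt s) ∧
        (∃ g : (↥(Finset.range (s+1)) → Fin d → ℝ) → Fin d → ℝ,
          Measurable g ∧ ∀ ω, εt s ω = g (fun i => ε i ω)) ∧
        P.map (εt s) = stdGaussian d := by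
      intro s
      induction s with
      | zero =>
        refine ⟨hεbase ▸ hmeas 0, ⟨fun v => v ⟨0, by simp⟩, measurable_pi_apply _,
          fun ω => by rw [hεbase]⟩, hεbase ▸ hgauss 0⟩
      | succ s ih =>
        obtain ⟨hms, ⟨g, hgm, hgr⟩, hlaw⟩ := ih
        have hmem : ∀ i : ↥(Finset.range (s+1)), (i : ℕ) ∈ Finset.range (s+2) := by
          intro i
          have := Finset.mem_range.mp i.2
          exact Finset.mem_range.mpr (by omega)
        have hrest : Measurable fun (v : ↥(Finset.range (s+2)) → Fin d → ℝ)
            (i : ↥(Finset.range (s+1))) => v ⟨(i : ℕ), hmem i⟩ :=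
          measurable_pi_iff.mpr fun i => measurable_pi_apply _
        set g' : (↥(Finset.range (s+2)) → Fin d → ℝ) → Fin d → ℝ :=
          fun v => Real.sqrt gbar • v ⟨s+1, by simp⟩
            + Real.sqrt (1 - gbar) • g (fun i => v ⟨(i : ℕ), hmem i⟩) with hg'
        have hg'm : Measurable g' := by
          rw [hg']
          have h2 : Measurable fun (v : ↥(Finset.range (s+2)) → Fin d → ℝ) =>
              g fun i => v ⟨(i : ℕ), hmem i⟩ := hgm.comp hrest
          exact ((measurable_pi_apply _).const_smul (Real.sqrt gbar)).add
            (h2.const_smul (Real.sqrt (1 - gbar)))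
        have hrep : ∀ ω, εt (s+1) ω = g' (fun i => ε i ω) := by
          intro ω
          rw [hεstep s ω, hg', hgr ω]
        have hm1 : Measurable (εt (s+1)) := by
          have : εt (s+1) = fun ω => g' (fun i => ε i ω) := funext hrep
          rw [this]
          exact hg'm.comp (measurable_pi_iff.mpr fun i => hmeas i)
        have hdisj : Disjoint ({s+1} : Finset ℕ) (Finset.range (s+1)) := by
          simp [Finset.disjoint_left]
        have hif := hind.indepFun_finset {s+1} (Finset.range (s+1)) hdisj hmeas
        have hindep : IndepFun (ε (s+1)) (εt s) P := by
          have := hif.comp (φ := fun v : (↥({s+1} : Finset ℕ) → Fin d → ℝ) => v ⟨s+1, by simp⟩)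
            (ψ := g) (_mγ := MeasurableSpace.pi) (measurable_pi_apply _) hgm
          have heq1 : ((fun v : (↥({s+1} : Finset ℕ) → Fin d → ℝ) => v ⟨s+1, by simp⟩)
              ∘ (fun a (i : ↥({s+1} : Finset ℕ)) => ε i a)) = ε (s+1) := rfl
          have heq2 : (g ∘ (fun a (i : ↥(Finset.range (s+1))) => ε i a)) = εt s :=
            funext fun ω => (hgr ω).symm
          rwa [heq1, heq2] at this
        have hab : (Real.sqrt gbar) ^ 2 + (Real.sqrt (1 - gbar)) ^ 2 = 1 := by
          rw [Real.sq_sqrt hgbar.1.le, Real.sq_sqrt (by linarith [hgbar.2])]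
          ring
        have hlaw1 : P.map (εt (s+1)) = stdGaussian d := by
          have : εt (s+1) = fun ω => Real.sqrt gbar • ε (s+1) ω
              + Real.sqrt (1 - gbar) • εt s ω := funext (hεstep s)
          rw [this]
          exact stdGaussian_comb P d _ _ (Real.sqrt_nonneg _) (Real.sqrt_nonneg _) hab
            (ε (s+1)) (εt s) (hmeas (s+1)) hms hindep (hgauss (s+1)) hlaw
        exact ⟨hm1, ⟨g', hg'm, hrep⟩, hlaw1⟩
    exact fun s => (key s).2.2
end

section
/- Let q(x_t | c) = N(√ᾱ_t·m_t(c), (1−ᾱ_t)I) and define q(x_{t−1} | x_t, c) = N(√ᾱ_{t−1}·m_{t−1}(c) + √(1−ᾱ_{t−1}−σ_t²)·(x_t − √ᾱ_t·m_t(c))/√(1−ᾱ_t), σ_t² I), where 0 ≤ σ_t² ≤ 1−ᾱ_{t−1}. Then the marginal ∫ q(x_t|c) q(x_{t−1}|x_t, c) dx_t equals N(√ᾱ_{t−1}·m_{t−1}(c), (1−ᾱ_{t−1})I). -/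
open MeasureTheory ProbabilityTheory

open scoped NNReal ENNReal
open Real


lemma gaussianPDFReal_symm (x : ℝ) (v : ℝ≥0) (y : ℝ) :
    gaussianPDFReal x v y = gaussianPDFReal y v x := by
  simp only [gaussianPDFReal]
  congr 2
  ring

lemma gaussianPDFReal_le (μ : ℝ) (v : ℝ≥0) (x : ℝ) :
    gaussianPDFReal μ v x ≤ (Real.sqrt (2 * π * v))⁻¹ := by
  rw [gaussianPDFReal]
  have h1 : rexp (-(x - μ) ^ 2 / (2 * v)) ≤ 1 := by
    rw [Real.exp_le_one_iff]
    apply div_nonpos_of_nonpos_of_nonneg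
    · simp [sq_nonneg]
    · positivity
  calc (√(2 * π * ↑v))⁻¹ * rexp (-(x - μ)^2 / (2 * ↑v))
      ≤ (√(2 * π * ↑v))⁻¹ * 1 := by
        apply mul_le_mul_of_nonneg_left h1 (by positivity)
    _ = _ := mul_one _


lemma gaussian_conv_pdf (v1 v2 : ℝ≥0) (hv1 : v1 ≠ 0) (hv2 : v2 ≠ 0) (y : ℝ) :
    ∫ x, gaussianPDFReal 0 v1 x * gaussianPDFReal x v2 y
      = gaussianPDFReal 0 (v1 + v2) y := by
  have hV1 : (0:ℝ) < v1 := by positivity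
  have hV2 : (0:ℝ) < v2 := by positivity
  set S : ℝ := (v1:ℝ) + v2 with hS
  have hSpos : (0:ℝ) < S := by positivity
  set K : ℝ := S / (2 * v1 * v2) with hK
  have hKpos : (0:ℝ) < K := by positivity
  set M : ℝ := (v1:ℝ) * y / S with hM
  have hpt : ∀ x : ℝ, gaussianPDFReal 0 v1 x * gaussianPDFReal x v2 y
      = ((√(2 * π * v1))⁻¹ * (√(2 * π * v2))⁻¹ * rexp (-(y - 0)^2 / (2 * S)))
        * rexp (-K * (x - M)^2) := by
    intro x
    simp only [gaussianPDFReal]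
    rw [show (√(2 * π * ↑v1))⁻¹ * rexp (-(x - 0) ^ 2 / (2 * ↑v1))
        * ((√(2 * π * ↑v2))⁻¹ * rexp (-(y - x) ^ 2 / (2 * ↑v2)))
        = (√(2 * π * ↑v1))⁻¹ * (√(2 * π * ↑v2))⁻¹
          * (rexp (-(x - 0) ^ 2 / (2 * ↑v1)) * rexp (-(y - x) ^ 2 / (2 * ↑v2))) by ring,
      ← Real.exp_add]
    have h2v1 : (2:ℝ) * v1 ≠ 0 := by positivity
    have h2v2 : (2:ℝ) * v2 ≠ 0 := by positivity
    have h2S : (2:ℝ) * S ≠ 0 := by positivity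
    have hexp : -(x - 0)^2/(2*(v1:ℝ)) + -(y - x)^2/(2*(v2:ℝ))
        = -(y - 0)^2/(2*S) + -K*(x - M)^2 := by
      rw [hK, hM]
      field_simp
      ring
    rw [hexp, Real.exp_add]
    ring
  rw [funext hpt, MeasureTheory.integral_const_mul,
    integral_sub_right_eq_self (fun a => rexp (-K * a^2)) M, integral_gaussian]
  have hconst : (√(2 * π * v1))⁻¹ * (√(2 * π * v2))⁻¹ * √(π / K) = (√(2 * π * S))⁻¹ := by
    rw [← Real.sqrt_inv (2*π*v1), ← Real.sqrt_inv (2*π*v2), ← Real.sqrt_mul (by positivity),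
      ← Real.sqrt_mul (by positivity), ← Real.sqrt_inv (2*π*S)]
    congr 1
    rw [hK]
    field_simp
  rw [gaussianPDFReal]
  push_cast
  rw [← hS]
  linear_combination hconst * rexp (-(y - 0) ^ 2 / (2 * S))

lemma measurable_gaussianPDF2 (v : ℝ≥0) :
    Measurable (fun p : ℝ × ℝ => gaussianPDF p.1 v p.2) := by
  unfold gaussianPDF gaussianPDFReal
  exact ((((measurable_snd.sub measurable_fst).pow_const 2).neg.div_const _).exp.const_mul
    _).ennreal_ofReal

lemma measurable_gaussianReal (v : ℝ≥0) : Measurable (fun x : ℝ => gaussianReal x v) := by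
  by_cases hv : v = 0
  · subst hv
    simp only [gaussianReal_zero_var]
    exact Measure.measurable_dirac
  · refine Measure.measurable_of_measurable_coe _ fun s hs => ?_
    simp_rw [gaussianReal_apply _ hv]
    exact Measurable.lintegral_prod_right' (ν := volume.restrict s)
      ((measurable_gaussianPDF2 v).comp (measurable_fst.prodMk measurable_snd))

lemma gaussianReal_bind (v1 v2 : ℝ≥0) :
    (gaussianReal 0 v1).bind (fun x => gaussianReal x v2) = gaussianReal 0 (v1 + v2) := by
  by_cases hv1 : v1 = 0
  · subst hv1
    rw [gaussianReal_zero_var, Measure.dirac_bind (measurable_gaussianReal v2), zero_add]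
  by_cases hv2 : v2 = 0
  · subst hv2
    simp only [gaussianReal_zero_var, add_zero]
    exact Measure.bind_dirac
  have hS : v1 + v2 ≠ 0 := by positivity
  ext s hs
  have hg : Measurable fun x : ℝ => gaussianReal x v2 s :=
    (Measure.measurable_coe hs).comp (measurable_gaussianReal v2)
  rw [Measure.bind_apply hs (_root_.measurable_gaussianReal v2).aemeasurable,
    gaussianReal_of_var_ne_zero 0 hv1,
    lintegral_withDensity_eq_lintegral_mul _ (measurable_gaussianPDF 0 v1) hg]
  simp only [Pi.mul_apply, Function.comp]
  calc ∫⁻ x, gaussianPDF 0 v1 x * gaussianReal x v2 s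
      = ∫⁻ x, ∫⁻ y in s, gaussianPDF 0 v1 x * gaussianPDF x v2 y := by
        refine lintegral_congr fun x => ?_
        rw [gaussianReal_apply _ hv2, ← lintegral_const_mul _ (measurable_gaussianPDF x v2)]
    _ = ∫⁻ y in s, ∫⁻ x, gaussianPDF 0 v1 x * gaussianPDF x v2 y := by
        refine lintegral_lintegral_swap ?_
        exact (((measurable_gaussianPDF 0 v1).comp measurable_fst).mul
          (measurable_gaussianPDF2 v2)).aemeasurable
    _ = ∫⁻ y in s, gaussianPDF 0 (v1 + v2) y := by
        refine lintegral_congr fun y => ?_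
        have hint : Integrable fun x => gaussianPDFReal 0 v1 x * gaussianPDFReal y v2 x := by
          refine Integrable.bdd_mul (c := (Real.sqrt (2 * Real.pi * v1))⁻¹) (integrable_gaussianPDFReal y v2)
            (measurable_gaussianPDFReal 0 v1).aestronglyMeasurable
            (ae_of_all _ fun x => ?_)
          rw [Real.norm_eq_abs, abs_of_nonneg (gaussianPDFReal_nonneg 0 v1 x)]
          exact gaussianPDFReal_le 0 v1 x
        simp_rw [gaussianPDF, show ∀ x : ℝ, gaussianPDFReal x v2 y = gaussianPDFReal y v2 x
            from fun x => gaussianPDFReal_symm x v2 y,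
          ← ENNReal.ofReal_mul (gaussianPDFReal_nonneg 0 v1 _)]
        rw [← ofReal_integral_eq_lintegral_ofReal hint (ae_of_all _ fun x =>
          mul_nonneg (gaussianPDFReal_nonneg 0 v1 x) (gaussianPDFReal_nonneg y v2 x))]
        congr 1
        simp_rw [gaussianPDFReal_symm y v2]
        exact gaussian_conv_pdf v1 v2 hv1 hv2 y
    _ = gaussianReal 0 (v1 + v2) s := (gaussianReal_apply _ hS s).symm

lemma measurable_map_add_left {G : Type*} [MeasurableSpace G] [Add G] [MeasurableAdd₂ G]
    (ν : Measure G) [SFinite ν] : Measurable fun z : G => ν.map (z + ·) := by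
  refine Measure.measurable_of_measurable_coe _ fun s hs => ?_
  have h : ∀ z : G, ν.map (z + ·) s = ν (Prod.mk z ⁻¹' ((fun p : G × G => p.1 + p.2) ⁻¹' s)) :=
    fun z => by rw [Measure.map_apply (measurable_const_add z) hs]; rfl
  simp_rw [h]
  exact measurable_measure_prodMk_left (measurable_add hs)

lemma bind_map_prod {α β δ : Type*} [MeasurableSpace α] [MeasurableSpace β] [MeasurableSpace δ]
    (μ : Measure α) (ν : Measure β) [SFinite ν] {F : α × β → δ} (hF : Measurable F)
    (hker : Measurable fun x => ν.map (fun y => F (x, y))) :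
    μ.bind (fun x => ν.map (fun y => F (x, y))) = (μ.prod ν).map F := by
  ext s hs
  rw [Measure.bind_apply hs hker.aemeasurable, Measure.map_apply hF hs, Measure.prod_apply (hF hs)]
  exact lintegral_congr fun x => Measure.map_apply (hF.comp measurable_prodMk_left) hs

lemma map_prod_gaussian (a b c : ℝ) :
    ((gaussianReal 0 1).prod (gaussianReal 0 1)).map (fun q : ℝ × ℝ => c + a * q.1 + b * q.2)
      = gaussianReal c ⟨a^2 + b^2, by positivity⟩ := by
  set va : ℝ≥0 := ⟨a^2, sq_nonneg a⟩ with hva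
  set vb : ℝ≥0 := ⟨b^2, sq_nonneg b⟩ with hvb
  have h1 : (gaussianReal 0 1).map (a * ·) = gaussianReal 0 va := by
    rw [gaussianReal_map_const_mul a, mul_zero, mul_one]
    rfl
  have h2 : (gaussianReal 0 1).map (b * ·) = gaussianReal 0 vb := by
    rw [gaussianReal_map_const_mul b, mul_zero, mul_one]
    rfl
  have m1 : Measurable (Prod.map (fun x : ℝ => a * x) (fun x : ℝ => b * x)) :=
    (measurable_const_mul a).prodMap (measurable_const_mul b)
  have m2 : Measurable (fun p : ℝ × ℝ => p.1 + p.2) := measurable_add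
  have m3 : Measurable (fun z : ℝ => c + z) := measurable_const_add c
  have hfun : (fun q : ℝ × ℝ => c + a * q.1 + b * q.2)
      = (fun z => c + z) ∘ ((fun p : ℝ × ℝ => p.1 + p.2) ∘ Prod.map (a * ·) (b * ·)) := by
    funext q
    simp [add_assoc]
  rw [hfun, ← Measure.map_map m3 (m2.comp m1), ← Measure.map_map m2 m1,
    ← Measure.map_prod_map _ _ (measurable_const_mul a) (measurable_const_mul b), h1, h2,
    ← bind_map_prod _ _ m2 (measurable_map_add_left (gaussianReal 0 vb)),
    show (fun x : ℝ => (gaussianReal 0 vb).map (fun y => x + y)) = fun x => gaussianReal x vb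
      from funext fun x => by rw [gaussianReal_map_const_add x, zero_add],
    gaussianReal_bind, gaussianReal_map_const_add c, zero_add,
    show va + vb = (⟨a^2 + b^2, by positivity⟩ : ℝ≥0) from NNReal.eq (by simp [hva, hvb]; rfl)]


/-- The isotropic Gaussian measure `N(μ, v·I)` on `ℝ^d`. -/
noncomputable def gaussIso (d : ℕ) (μ : Fin d → ℝ) (v : ℝ) : Measure (Fin d → ℝ) :=
  (stdGaussian d).map fun x => μ + Real.sqrt v • x

lemma gaussIso_eq_pi (d : ℕ) (μf : Fin d → ℝ) {v : ℝ} (hv : 0 ≤ v) :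
    gaussIso d μf v = Measure.pi fun i => gaussianReal (μf i) v.toNNReal := by
  have hcoord : ∀ i : Fin d, MeasurePreserving (fun t : ℝ => μf i + Real.sqrt v * t)
      (gaussianReal 0 1) (gaussianReal (μf i) v.toNNReal) := by
    intro i
    refine ⟨(measurable_const_mul _).const_add _, ?_⟩
    have hc : (fun t : ℝ => μf i + Real.sqrt v * t)
        = (fun z : ℝ => μf i + z) ∘ (Real.sqrt v * ·) := rfl
    rw [hc, ← Measure.map_map (measurable_const_add _) (measurable_const_mul _),
      gaussianReal_map_const_mul, mul_zero, mul_one, gaussianReal_map_const_add, zero_add]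
    congr 1
    exact NNReal.eq (by simp [Real.sq_sqrt hv, Real.coe_toNNReal _ hv])
  exact (measurePreserving_pi (fun _ : Fin d => gaussianReal 0 1)
    (fun i => gaussianReal (μf i) v.toNNReal) hcoord).map_eq

/-- DDIM-like consistency (Theorem 1): with `q(x_t | c) = N(√ᾱ_t·m_t, (1−ᾱ_t)I)` and
`q(x_{t−1} | x_t, c) = N(√ᾱ_{t−1}·m_{t−1} + √(1−ᾱ_{t−1}−σ_t²)·(x_t − √ᾱ_t·m_t)/√(1−ᾱ_t), σ_t² I)`
where `0 ≤ σ_t² ≤ 1−ᾱ_{t−1}`, the marginal `∫ q(x_t|c) q(x_{t−1}|x_t, c) dx_t` equals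
`N(√ᾱ_{t−1}·m_{t−1}, (1−ᾱ_{t−1})I)`. -/
theorem ddim_marginal_consistency (d : ℕ) (abart abart1 σ2 : ℝ)
    (habart : abart ∈ Set.Ioo (0 : ℝ) 1) (habart1 : abart1 ∈ Set.Ioo (0 : ℝ) 1)
    (hσ0 : 0 ≤ σ2) (hσ1 : σ2 ≤ 1 - abart1)
    (mt mt1 : Fin d → ℝ) :
    (gaussIso d (Real.sqrt abart • mt) (1 - abart)).bind
        (fun xt => gaussIso d
          (Real.sqrt abart1 • mt1
            + (Real.sqrt (1 - abart1 - σ2) / Real.sqrt (1 - abart))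
              • (xt - Real.sqrt abart • mt)) σ2)
      = gaussIso d (Real.sqrt abart1 • mt1) (1 - abart1) := by
  obtain ⟨_, ha1⟩ := habart
  obtain ⟨hb0, hb1⟩ := habart1
  have hv1 : (0:ℝ) < 1 - abart := by linarith
  have hA0 : (0:ℝ) ≤ 1 - abart1 - σ2 := by linarith
  have hb1' : (0:ℝ) ≤ 1 - abart1 := by linarith
  set γ : Measure ℝ := gaussianReal 0 1 with hγ
  set s : ℝ := Real.sqrt (1 - abart) with hsdef
  have hs0 : s ≠ 0 := (Real.sqrt_pos.mpr hv1).ne'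
  set A : ℝ := Real.sqrt (1 - abart1 - σ2) with hAdef
  set t : ℝ := Real.sqrt σ2 with htdef
  set b : Fin d → ℝ := Real.sqrt abart • mt with hbdef
  set c : Fin d → ℝ := Real.sqrt abart1 • mt1 with hcdef
  set k : ℝ := A / s with hkdef
  have hprob : IsProbabilityMeasure (stdGaussian d) := by unfold _root_.stdGaussian; infer_instance
  have hsmul_t : Measurable fun y : Fin d → ℝ => t • y := measurable_const_smul t
  set ν : Measure (Fin d → ℝ) := (stdGaussian d).map (t • ·) with hνdef
  have hνprob : IsProbabilityMeasure ν := Measure.isProbabilityMeasure_map hsmul_t.aemeasurable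
  set w : (Fin d → ℝ) → (Fin d → ℝ) := fun xt => c + k • (xt - b) with hwdef
  have hw : Measurable w := ((measurable_id.sub_const b).const_smul k).const_add c
  set f : (Fin d → ℝ) → (Fin d → ℝ) := fun x => b + s • x with hfdef
  have hf : Measurable f := (measurable_const_smul s).const_add b
  -- the kernel as a translate family
  have hKeq : (fun xt => gaussIso d
        (Real.sqrt abart1 • mt1
          + (Real.sqrt (1 - abart1 - σ2) / Real.sqrt (1 - abart))
            • (xt - Real.sqrt abart • mt)) σ2)
      = fun xt => ν.map (fun y => w xt + y) := by
    funext xt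
    exact (Measure.map_map (measurable_const_add (w xt)) hsmul_t).symm
  have hK : Measurable fun xt => ν.map (fun y => w xt + y) :=
    (measurable_map_add_left ν).comp hw
  rw [hKeq]
  -- outer measure is a map; push it into the kernel
  have stepA : ((stdGaussian d).map f).bind (fun xt => ν.map (fun y => w xt + y))
      = (stdGaussian d).bind (fun x => ν.map (fun y => w (f x) + y)) := by
    ext u hu
    rw [Measure.bind_apply hu hK.aemeasurable, Measure.bind_apply hu (show Measurable fun x => Measure.map (fun y => w (f x) + y) ν from hK.comp hf).aemeasurable]
    exact lintegral_map (by exact (Measure.measurable_coe hu).comp hK) hf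
  have hLHS : gaussIso d b (1 - abart) = (stdGaussian d).map f := rfl
  rw [hLHS, stepA]
  have hwf : ∀ x, w (f x) = c + A • x := by
    intro x
    rw [hwdef, hfdef]
    simp only [add_sub_cancel_left, smul_smul, hkdef]
    rw [div_mul_cancel₀ _ hs0]
  -- to product form
  set F : (Fin d → ℝ) × (Fin d → ℝ) → (Fin d → ℝ) := fun p => (c + A • p.1) + t • p.2 with hFdef
  have hFmeas : Measurable F := ((measurable_fst.const_smul A).const_add c).add
    (measurable_snd.const_smul t)
  have hker2 : (fun x => (stdGaussian d).map (fun y => F (x, y)))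
      = fun x => ν.map (fun y => (c + A • x) + y) := by
    funext x
    exact (Measure.map_map (measurable_const_add (c + A • x)) hsmul_t).symm
  have stepB : (fun x => ν.map (fun y => w (f x) + y))
      = fun x => (stdGaussian d).map (fun y => F (x, y)) := by
    funext x
    rw [hwf x]
    exact (congrFun hker2 x).symm
  rw [stepB, bind_map_prod _ _ hFmeas (by
    rw [hker2]
    exact (measurable_map_add_left ν).comp ((measurable_id.const_smul A).const_add c))]
  -- product of standard Gaussians as a pi measure
  set e := MeasurableEquiv.arrowProdEquivProdArrow ℝ ℝ (Fin d) with hedef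
  have he : (Measure.pi fun _ : Fin d => γ.prod γ).map e
      = (stdGaussian d).prod (stdGaussian d) :=
    (measurePreserving_arrowProdEquivProdArrow ℝ ℝ (Fin d)
      (fun _ => γ) (fun _ => γ)).map_eq
  rw [← he, Measure.map_map hFmeas e.measurable]
  set V : ℝ≥0 := ⟨A^2 + t^2, by positivity⟩ with hVdef
  have hco : ∀ i : Fin d, MeasurePreserving (fun q : ℝ × ℝ => c i + A * q.1 + t * q.2)
      (γ.prod γ) (gaussianReal (c i) V) := by
    intro i
    exact ⟨((measurable_fst.const_mul A).const_add _).add (measurable_snd.const_mul t),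
      map_prod_gaussian A t (c i)⟩
  have hFe : F ∘ e = fun (a : Fin d → ℝ × ℝ) (i : Fin d) => c i + A * (a i).1 + t * (a i).2 := by
    funext a
    simp only [Function.comp_apply, hedef, MeasurableEquiv.arrowProdEquivProdArrow,
      Equiv.arrowProdEquivProdArrow, MeasurableEquiv.coe_mk, Equiv.coe_fn_mk, hFdef]
    rfl
  rw [hFe, (measurePreserving_pi (fun _ : Fin d => γ.prod γ)
    (fun i => gaussianReal (c i) V) hco).map_eq, gaussIso_eq_pi d c hb1']
  congr 1
  funext i
  congr 1
  refine NNReal.eq ?_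
  rw [Real.coe_toNNReal _ hb1']
  show A^2 + t^2 = 1 - abart1
  rw [hAdef, htdef, Real.sq_sqrt hA0, Real.sq_sqrt hσ0]
  ring
end
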